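/- Let F(λ) = 3^{3/2}·cosh((2λ)^{1/4})·(cosh^2((2λ)^{1/4}) + 2)^{-3/2} for λ > 0. Then F''(λ) = (1/(9√2))·λ^{-1/2} + O(1) as λ ↓ 0, and F''(λ) = O(exp(-2(2λ)^{1/4})) as λ → ∞. -/

import Mathlib

/-!
Write `u = (2λ)^{1/4}` and `A = cosh² u + 2`. The map `λ ↦ u` has derivative `1 / (2u³)`, so two
applications of the chain rule give `F''(λ) = -(3/2) √(3A) sinh² u · B(u) / (u⁷ A⁴)` with
`B(u) = 3A (u cosh u - sinh u) - 5u sinh² u cosh u`.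

As `u → 0`, `√(3A) → 3`, `sinh² u ~ u²`, `B(u) ~ -2u³` and `A⁴ → 81`, so the numerator is
`u⁵A⁴/9 + O(u⁷)`, i.e. `F''(λ) = 1/(9u²) + O(1) = λ^{-1/2}/(9√2) + O(1)`; the `O(u⁷)` is made
explicit with Taylor brackets for `sinh` and `cosh`. As `u → ∞`, `|B(u)| ≤ 11 A u cosh u`, which
gives `|F''(λ)| ≤ 99 / (2 cosh² u) ≤ 198 e^{-2u}`.
-/

open Asymptotics Filter Real

namespace HullLaplace

lemma hasDerivAt_comp_two_mul_rpow_quarter {H : ℝ → ℝ} {h' l : ℝ} (hl : 0 < l)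
    (hH : HasDerivAt H h' ((2 * l) ^ ((1 : ℝ) / 4))) :
    HasDerivAt (fun x => H ((2 * x) ^ ((1 : ℝ) / 4)))
      (h' / (2 * ((2 * l) ^ ((1 : ℝ) / 4)) ^ 3)) l := by
  have h2l : 0 < 2 * l := by positivity
  have hroot :=
    ((hasDerivAt_id l).const_mul (2 : ℝ)).rpow_const (p := (1 : ℝ) / 4) (Or.inl h2l.ne')
  refine (hH.comp l hroot).congr_deriv ?_
  have hcube : (2 * l) ^ (-(3 : ℝ) / 4) * ((2 * l) ^ ((1 : ℝ) / 4)) ^ 3 = 1 := by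
    rw [← rpow_natCast, ← rpow_mul h2l.le, ← rpow_add h2l]
    norm_num
  simp only [id, mul_one, show (1 : ℝ) / 4 - 1 = -(3 : ℝ) / 4 by norm_num]
  rw [eq_div_iff (by positivity)]
  linear_combination h' * hcube

lemma hasDerivAt_cosh_mul_rpow (u : ℝ) :
    HasDerivAt (fun v => cosh v * (cosh v ^ 2 + 2) ^ (-(3 : ℝ) / 2))
      (-2 * sinh u ^ 3 * (cosh u ^ 2 + 2) ^ (-(5 : ℝ) / 2)) u := by
  have hA : 0 < cosh u ^ 2 + 2 := by positivity
  refine ((hasDerivAt_cosh u).mul (((hasDerivAt_cosh u).pow 2).add_const 2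
    |>.rpow_const (p := -(3 : ℝ) / 2) (Or.inl hA.ne'))).congr_deriv ?_
  simp only [Pi.pow_apply]
  rw [show -(3 : ℝ) / 2 - 1 = -(5 : ℝ) / 2 by norm_num,
    show -(3 : ℝ) / 2 = 1 + -(5 : ℝ) / 2 by norm_num, rpow_add hA, rpow_one]
  linear_combination (-2 * sinh u * (cosh u ^ 2 + 2) ^ (-(5 : ℝ) / 2)) * cosh_sq u

noncomputable def secondDerivFactor (u : ℝ) : ℝ :=
  3 * (cosh u ^ 2 + 2) * (u * cosh u - sinh u) - 5 * u * sinh u ^ 2 * cosh u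

lemma hasDerivAt_sinh_pow_mul_rpow_div {u : ℝ} (hu : 0 < u) :
    HasDerivAt (fun v => -sinh v ^ 3 * (cosh v ^ 2 + 2) ^ (-(5 : ℝ) / 2) / v ^ 3)
      (-sinh u ^ 2 * (cosh u ^ 2 + 2) ^ (-(7 : ℝ) / 2) * secondDerivFactor u / u ^ 4) u := by
  have hA : 0 < cosh u ^ 2 + 2 := by positivity
  refine ((((hasDerivAt_sinh u).pow 3).neg.mul (((hasDerivAt_cosh u).pow 2).add_const 2
    |>.rpow_const (p := -(5 : ℝ) / 2) (Or.inl hA.ne'))).div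
      ((hasDerivAt_id u).pow 3) (pow_pos hu 3).ne').congr_deriv ?_
  simp only [Pi.pow_apply, Pi.neg_apply, Pi.mul_apply, id]
  rw [show -(5 : ℝ) / 2 - 1 = -(7 : ℝ) / 2 by norm_num,
    show -(5 : ℝ) / 2 = 1 + -(7 : ℝ) / 2 by norm_num, rpow_add hA, rpow_one, secondDerivFactor]
  field_simp
  ring

noncomputable def secondDeriv (u : ℝ) : ℝ :=
  -(3 / 2) * √(3 * (cosh u ^ 2 + 2)) * sinh u ^ 2 * secondDerivFactor u /
    (u ^ 7 * (cosh u ^ 2 + 2) ^ 4)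

lemma three_rpow_mul_rpow_neg_seven_halves {A : ℝ} (hA : 0 < A) :
    3 ^ ((3 : ℝ) / 2) * A ^ (-(7 : ℝ) / 2) = 3 * √(3 * A) / A ^ 4 := by
  rw [show (3 : ℝ) / 2 = 1 + 1 / 2 by norm_num, show -(7 : ℝ) / 2 = 1 / 2 + -4 by norm_num,
    rpow_add three_pos, rpow_add hA, rpow_one, ← sqrt_eq_rpow, ← sqrt_eq_rpow, rpow_neg hA.le,
    sqrt_mul zero_le_three]
  norm_num
  ring

lemma deriv_deriv_eq_secondDeriv {F : ℝ → ℝ}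
    (hF : ∀ l : ℝ, F l = 3 ^ ((3 : ℝ) / 2) * cosh ((2 * l) ^ ((1 : ℝ) / 4)) *
      (cosh ((2 * l) ^ ((1 : ℝ) / 4)) ^ 2 + 2) ^ (-(3 : ℝ) / 2)) {l : ℝ} (hl : 0 < l) :
    deriv (deriv F) l = secondDeriv ((2 * l) ^ ((1 : ℝ) / 4)) := by
  set K : ℝ := 3 ^ ((3 : ℝ) / 2)
  have hF' : ∀ x, 0 < x → HasDerivAt F (K * (-sinh ((2 * x) ^ ((1 : ℝ) / 4)) ^ 3 *
      (cosh ((2 * x) ^ ((1 : ℝ) / 4)) ^ 2 + 2) ^ (-(5 : ℝ) / 2) /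
        ((2 * x) ^ ((1 : ℝ) / 4)) ^ 3)) x := by
    intro x hx
    rw [show F = fun y => K * (cosh ((2 * y) ^ ((1 : ℝ) / 4)) *
        (cosh ((2 * y) ^ ((1 : ℝ) / 4)) ^ 2 + 2) ^ (-(3 : ℝ) / 2)) by
      funext y; rw [hF, mul_assoc]]
    refine (hasDerivAt_comp_two_mul_rpow_quarter hx
      ((hasDerivAt_cosh_mul_rpow _).const_mul K)).congr_deriv ?_
    ring
  have hderiv : deriv F =ᶠ[nhds l] fun x => K * (-sinh ((2 * x) ^ ((1 : ℝ) / 4)) ^ 3 *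
      (cosh ((2 * x) ^ ((1 : ℝ) / 4)) ^ 2 + 2) ^ (-(5 : ℝ) / 2) /
        ((2 * x) ^ ((1 : ℝ) / 4)) ^ 3) :=
    (eventually_gt_nhds hl).mono fun x hx => (hF' x hx).deriv
  have hu : 0 < (2 * l) ^ ((1 : ℝ) / 4) := by positivity
  rw [hderiv.deriv_eq, (hasDerivAt_comp_two_mul_rpow_quarter hl
    ((hasDerivAt_sinh_pow_mul_rpow_div hu).const_mul K)).deriv]
  set u := (2 * l) ^ ((1 : ℝ) / 4)
  have hA : 0 < cosh u ^ 2 + 2 := by positivity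
  calc K * (-sinh u ^ 2 * (cosh u ^ 2 + 2) ^ (-(7 : ℝ) / 2) * secondDerivFactor u / u ^ 4) /
        (2 * u ^ 3)
      = -(K * (cosh u ^ 2 + 2) ^ (-(7 : ℝ) / 2)) * sinh u ^ 2 * secondDerivFactor u /
          (2 * u ^ 7) := by
        ring
    _ = secondDeriv u := by
        rw [three_rpow_mul_rpow_neg_seven_halves hA, secondDeriv]
        generalize cosh u ^ 2 + 2 = A
        ring

lemma sinh_cosh_taylor_bounds {u : ℝ} (h0 : 0 ≤ u) (h1 : u ≤ 1) :
    u + u ^ 3 / 6 ≤ sinh u ∧ sinh u ≤ u + u ^ 3 / 6 + u ^ 5 / 100 ∧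
      1 + u ^ 2 / 2 ≤ cosh u ∧ cosh u ≤ 1 + u ^ 2 / 2 + u ^ 4 / 20 := by
  have hexp := exp_bound (n := 6) (x := u) (by rwa [abs_of_nonneg h0]) (by norm_num)
  have hexp_neg :=
    exp_bound (n := 6) (x := -u) (by rwa [abs_neg, abs_of_nonneg h0]) (by norm_num)
  norm_num [Finset.sum_range_succ, Nat.factorial, abs_of_nonneg h0, abs_le] at hexp hexp_neg
  rw [sinh_eq, cosh_eq]
  have h5 : u ^ 6 ≤ u ^ 5 := pow_le_pow_of_le_one h0 h1 (by norm_num)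
  have h6 : u ^ 6 ≤ u ^ 4 := pow_le_pow_of_le_one h0 h1 (by norm_num)
  refine ⟨?_, ?_, ?_, ?_⟩ <;> linarith [pow_nonneg h0 3, pow_nonneg h0 5, pow_nonneg h0 4]

lemma pow_succ_le_pow_div_two {u : ℝ} (h0 : 0 ≤ u) (h1 : u ≤ 1 / 2) (k : ℕ) :
    u ^ (k + 1) ≤ u ^ k / 2 := by
  rw [pow_succ]
  nlinarith [pow_nonneg h0 k]

section SmallArgument

variable {u : ℝ} (h0 : 0 < u) (h1 : u ≤ 1 / 2)
include h0 h1

lemma sinh_sq_bounds :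
    u ^ 2 + u ^ 4 / 3 ≤ sinh u ^ 2 ∧ sinh u ^ 2 ≤ u ^ 2 + u ^ 4 / 3 + u ^ 6 / 10 := by
  obtain ⟨hs₁, hs₂, -, -⟩ := sinh_cosh_taylor_bounds h0.le (by linarith)
  have hlow : 0 ≤ u + u ^ 3 / 6 := by positivity
  have := pow_succ_le_pow_div_two h0.le h1
  constructor
  · nlinarith [pow_le_pow_left₀ hlow hs₁ 2]
  · nlinarith [pow_le_pow_left₀ (hlow.trans hs₁) hs₂ 2, this 6, this 7, this 8, this 9,
      pow_pos h0 6]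

lemma mul_cosh_sub_sinh_bounds :
    u ^ 3 / 3 - u ^ 5 / 100 ≤ u * cosh u - sinh u ∧
      u * cosh u - sinh u ≤ u ^ 3 / 3 + u ^ 5 / 20 := by
  obtain ⟨hs₁, hs₂, hc₁, hc₂⟩ := sinh_cosh_taylor_bounds h0.le (by linarith)
  constructor
  · nlinarith [mul_le_mul_of_nonneg_left hc₁ h0.le]
  · nlinarith [mul_le_mul_of_nonneg_left hc₂ h0.le]

lemma secondDerivFactor_bounds :
    -2 * u ^ 3 - 5 * u ^ 5 ≤ secondDerivFactor u ∧
      secondDerivFactor u ≤ -2 * u ^ 3 - 2 * u ^ 5 := by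
  obtain ⟨-, -, hc₁, hc₂⟩ := sinh_cosh_taylor_bounds h0.le (by linarith)
  obtain ⟨hs₁, hs₂⟩ := sinh_sq_bounds h0 h1
  obtain ⟨hd₁, hd₂⟩ := mul_cosh_sub_sinh_bounds h0 h1
  have := pow_succ_le_pow_div_two h0.le h1
  have hA : cosh u ^ 2 + 2 = sinh u ^ 2 + 3 := by rw [cosh_sq]; ring
  have hd₀ : 0 ≤ u ^ 3 / 3 - u ^ 5 / 100 := by nlinarith [this 3, this 4, pow_pos h0 3]
  have hlow : (9 + 3 * u ^ 2) * (u ^ 3 / 3 - u ^ 5 / 100) ≤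
      3 * (sinh u ^ 2 + 3) * (u * cosh u - sinh u) :=
    mul_le_mul (by linarith [pow_pos h0 4]) hd₁ hd₀ (by positivity)
  have hup : 3 * (sinh u ^ 2 + 3) * (u * cosh u - sinh u) ≤
      (9 + 3 * u ^ 2 + u ^ 4 + u ^ 6) * (u ^ 3 / 3 + u ^ 5 / 20) :=
    mul_le_mul (by nlinarith [this 5, pow_pos h0 6]) hd₂ (hd₀.trans hd₁) (by positivity)
  have hlow' : u * ((u ^ 2 + u ^ 4 / 3) * (1 + u ^ 2 / 2)) ≤ u * (sinh u ^ 2 * cosh u) :=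
    mul_le_mul_of_nonneg_left (mul_le_mul hs₁ hc₁ (by positivity) (sq_nonneg _)) h0.le
  have hup' : u * (sinh u ^ 2 * cosh u) ≤
      u * ((u ^ 2 + u ^ 4 / 3 + u ^ 6 / 10) * (1 + u ^ 2 / 2 + u ^ 4 / 20)) :=
    mul_le_mul_of_nonneg_left (mul_le_mul hs₂ hc₂ (by positivity) (by positivity)) h0.le
  rw [secondDerivFactor, hA]
  constructor
  · nlinarith only [hlow, hup', this 6, this 7, this 8, this 9, this 10, pow_pos h0 5,
      pow_pos h0 7]
  · nlinarith only [hup, hlow', this 6, this 7, this 8, this 9, this 10, pow_pos h0 5,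
      pow_pos h0 7]

lemma abs_leading_terms_add_le :
    |3 / 2 * √(3 * (cosh u ^ 2 + 2)) * sinh u ^ 2 * secondDerivFactor u +
      u ^ 5 * (cosh u ^ 2 + 2) ^ 4 / 9| ≤ 50 * u ^ 7 := by
  obtain ⟨hs₁, hs₂⟩ := sinh_sq_bounds h0 h1
  obtain ⟨hB₁, hB₂⟩ := secondDerivFactor_bounds h0 h1
  have := pow_succ_le_pow_div_two h0.le h1
  have hA : cosh u ^ 2 + 2 = sinh u ^ 2 + 3 := by rw [cosh_sq]; ring
  rw [hA]
  have hx₀ : 0 ≤ sinh u ^ 2 := sq_nonneg _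
  have hx : sinh u ^ 2 ≤ 11 / 40 := by nlinarith [this 2, this 3, this 4, this 5]
  have hw₁ : 3 ≤ √(3 * (sinh u ^ 2 + 3)) := le_sqrt_of_sq_le (by nlinarith)
  have hw₂ : √(3 * (sinh u ^ 2 + 3)) ≤ 3 + u ^ 2 :=
    sqrt_le_iff.mpr ⟨by positivity, by nlinarith [this 2, this 3, this 4, this 5]⟩
  have hB₀ : -2 * u ^ 3 - 2 * u ^ 5 ≤ 0 := by nlinarith [pow_pos h0 3, pow_pos h0 5]
  have hP : (u ^ 2 + u ^ 4 / 3 + u ^ 6 / 10) * (-2 * u ^ 3 - 5 * u ^ 5) ≤ 0 :=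
    mul_nonpos_of_nonneg_of_nonpos (by positivity) (by nlinarith [pow_pos h0 3, pow_pos h0 5])
  have hsB₁ : (u ^ 2 + u ^ 4 / 3 + u ^ 6 / 10) * (-2 * u ^ 3 - 5 * u ^ 5) ≤
      sinh u ^ 2 * secondDerivFactor u :=
    (mul_le_mul_of_nonpos_right hs₂ (by linarith [pow_pos h0 5])).trans
      (mul_le_mul_of_nonneg_left hB₁ hx₀)
  have hsB₂ : sinh u ^ 2 * secondDerivFactor u ≤
      (u ^ 2 + u ^ 4 / 3) * (-2 * u ^ 3 - 2 * u ^ 5) :=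
    (mul_le_mul_of_nonneg_left hB₂ hx₀).trans (mul_le_mul_of_nonpos_right hs₁ hB₀)
  have hsB₀ : sinh u ^ 2 * secondDerivFactor u ≤ 0 :=
    hsB₂.trans (mul_nonpos_of_nonneg_of_nonpos (by positivity) hB₀)
  have hA₁ : (81 : ℝ) ≤ (sinh u ^ 2 + 3) ^ 4 :=
    (by norm_num : (81 : ℝ) = 3 ^ 4).trans_le (pow_le_pow_left₀ (by norm_num) (by linarith) 4)
  have hA₂ : (sinh u ^ 2 + 3) ^ 4 ≤ 81 + 137 * u ^ 2 := by
    have hcubic : 0 ≤ 16 - 54 * sinh u ^ 2 - 12 * (sinh u ^ 2) ^ 2 - (sinh u ^ 2) ^ 3 := by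
      nlinarith [mul_le_mul hx hx hx₀ (by norm_num), pow_le_pow_left₀ hx₀ hx 3]
    nlinarith [mul_nonneg hx₀ hcubic]
  have hpoly : -9 * u ^ 5 - 40 * u ^ 7 ≤
      3 / 2 * ((3 + u ^ 2) * ((u ^ 2 + u ^ 4 / 3 + u ^ 6 / 10) * (-2 * u ^ 3 - 5 * u ^ 5))) := by
    nlinarith only [this 7, this 8, this 9, this 10, this 11, this 12, pow_pos h0 7,
      pow_pos h0 9]
  rw [abs_le]
  constructor
  · nlinarith [mul_le_mul_of_nonpos_right hw₂ hP,
      mul_le_mul_of_nonneg_left hsB₁ (zero_le_three.trans hw₁),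
      mul_le_mul_of_nonneg_left hA₁ (pow_pos h0 5).le]
  · nlinarith [mul_le_mul_of_nonpos_right hw₁ hsB₀,
      mul_le_mul_of_nonneg_left hA₂ (pow_pos h0 5).le]

lemma abs_secondDeriv_sub_le : |secondDeriv u - 1 / (9 * u ^ 2)| ≤ 1 := by
  have hA : (81 : ℝ) ≤ (cosh u ^ 2 + 2) ^ 4 :=
    (by norm_num : (81 : ℝ) = 3 ^ 4).trans_le
      (pow_le_pow_left₀ (by norm_num) (by nlinarith [one_le_cosh u]) 4)
  have hD : 0 < u ^ 7 * (cosh u ^ 2 + 2) ^ 4 := by positivity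
  have hsplit : secondDeriv u - 1 / (9 * u ^ 2) =
      -(3 / 2 * √(3 * (cosh u ^ 2 + 2)) * sinh u ^ 2 * secondDerivFactor u +
        u ^ 5 * (cosh u ^ 2 + 2) ^ 4 / 9) / (u ^ 7 * (cosh u ^ 2 + 2) ^ 4) := by
    rw [secondDeriv]
    field_simp
    ring
  rw [hsplit, abs_div, abs_neg, abs_of_pos hD, div_le_one hD]
  nlinarith [abs_leading_terms_add_le h0 h1, mul_le_mul_of_nonneg_left hA (pow_pos h0 7).le]

end SmallArgument

lemma isBigO_secondDeriv_sub_nhdsGT :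
    (fun u => secondDeriv u - 1 / (9 * u ^ 2)) =O[nhdsWithin 0 (Set.Ioi 0)] fun _ => (1 : ℝ) :=
  isBigO_iff.mpr ⟨1, by
    filter_upwards [Ioc_mem_nhdsGT (by norm_num : (0 : ℝ) < 1 / 2)] with u hu
    simpa using abs_secondDeriv_sub_le hu.1 hu.2⟩

lemma abs_secondDerivFactor_le {u : ℝ} (hu : 1 ≤ u) :
    |secondDerivFactor u| ≤ 11 * (cosh u ^ 2 + 2) * u * cosh u := by
  have hs : 0 ≤ sinh u := sinh_nonneg_iff.mpr (by linarith)
  have hsc : sinh u ≤ cosh u := (sinh_lt_cosh u).le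
  have hcu : cosh u ≤ u * cosh u := le_mul_of_one_le_left (by linarith) hu
  have hB : 0 ≤ u * sinh u ^ 2 * cosh u := by positivity
  rw [secondDerivFactor, abs_le]
  constructor <;> nlinarith [mul_le_mul hsc hsc hs (by linarith)]

lemma exp_two_mul_le_four_mul_cosh_sq (u : ℝ) : exp (2 * u) ≤ 4 * cosh u ^ 2 := by
  have h : exp u ≤ 2 * cosh u := by rw [cosh_eq]; linarith [exp_pos (-u)]
  calc exp (2 * u) = exp u ^ 2 := by rw [← exp_nat_mul]; norm_num
    _ ≤ (2 * cosh u) ^ 2 := pow_le_pow_left₀ (exp_pos u).le h 2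
    _ = 4 * cosh u ^ 2 := by ring

lemma abs_secondDeriv_le {u : ℝ} (hu : 1 ≤ u) : |secondDeriv u| ≤ 198 * exp (-2 * u) := by
  set A := cosh u ^ 2 + 2 with hA_def
  have hA : cosh u ^ 2 ≤ A := by linarith
  have hsc : sinh u ^ 2 ≤ cosh u ^ 2 := by nlinarith [cosh_sq u]
  have hw : √(3 * A) ≤ 3 * cosh u :=
    sqrt_le_iff.mpr ⟨by positivity, by nlinarith [one_le_cosh u]⟩
  have hnum : |3 / 2 * √(3 * A) * sinh u ^ 2 * secondDerivFactor u| ≤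
      99 / 2 * u * A * cosh u ^ 4 := by
    rw [abs_mul, abs_of_nonneg (by positivity : 0 ≤ 3 / 2 * √(3 * A) * sinh u ^ 2)]
    calc 3 / 2 * √(3 * A) * sinh u ^ 2 * |secondDerivFactor u|
        ≤ 3 / 2 * (3 * cosh u) * cosh u ^ 2 * (11 * A * u * cosh u) := by
          gcongr
          exact abs_secondDerivFactor_le hu
      _ = 99 / 2 * u * A * cosh u ^ 4 := by ring
  have hden : u * A * cosh u ^ 6 ≤ u ^ 7 * A ^ 4 := by
    have hu7 : u ≤ u ^ 7 := le_self_pow₀ hu (by norm_num)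
    have hc6 : cosh u ^ 6 ≤ A ^ 3 := by
      rw [show cosh u ^ 6 = (cosh u ^ 2) ^ 3 by ring]
      exact pow_le_pow_left₀ (sq_nonneg _) hA 3
    calc u * A * cosh u ^ 6 ≤ u ^ 7 * A * A ^ 3 := by gcongr
      _ = u ^ 7 * A ^ 4 := by ring
  have hexp : 1 ≤ 4 * exp (-2 * u) * cosh u ^ 2 :=
    calc 1 = exp (-2 * u) * exp (2 * u) := by rw [← exp_add]; norm_num
      _ ≤ exp (-2 * u) * (4 * cosh u ^ 2) := by
        gcongr
        exact exp_two_mul_le_four_mul_cosh_sq u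
      _ = 4 * exp (-2 * u) * cosh u ^ 2 := by ring
  have hD : 0 < u ^ 7 * A ^ 4 := by positivity
  rw [secondDeriv, ← hA_def, neg_mul, neg_mul, neg_mul, neg_div, abs_neg, abs_div,
    abs_of_pos hD, div_le_iff₀ hD]
  calc _ ≤ 99 / 2 * u * A * cosh u ^ 4 := hnum
    _ ≤ 99 / 2 * (4 * exp (-2 * u) * cosh u ^ 2) * (u * A * cosh u ^ 4) := by
        nlinarith [show 0 ≤ u * A * cosh u ^ 4 by positivity]
    _ = 198 * exp (-2 * u) * (u * A * cosh u ^ 6) := by ring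
    _ ≤ 198 * exp (-2 * u) * (u ^ 7 * A ^ 4) := by gcongr

lemma isBigO_secondDeriv_atTop : secondDeriv =O[atTop] fun u => exp (-2 * u) :=
  isBigO_iff.mpr ⟨198, by
    filter_upwards [eventually_ge_atTop 1] with u hu
    simpa [abs_of_pos (exp_pos _)] using abs_secondDeriv_le hu⟩

lemma tendsto_two_mul_rpow_quarter_nhdsGT :
    Tendsto (fun l : ℝ => (2 * l) ^ ((1 : ℝ) / 4)) (nhdsWithin 0 (Set.Ioi 0))
      (nhdsWithin 0 (Set.Ioi 0)) := by
  refine tendsto_nhdsWithin_of_tendsto_nhds_of_eventually_within _ ?_ ?_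
  · have : Continuous fun l : ℝ => (2 * l) ^ ((1 : ℝ) / 4) := by fun_prop (disch := norm_num)
    exact (this.tendsto' 0 0 (by norm_num)).mono_left nhdsWithin_le_nhds
  · filter_upwards [self_mem_nhdsWithin] with l hl
    exact rpow_pos_of_pos (by simpa using hl) _

lemma tendsto_two_mul_rpow_quarter_atTop :
    Tendsto (fun l : ℝ => (2 * l) ^ ((1 : ℝ) / 4)) atTop atTop :=
  (tendsto_rpow_atTop (by norm_num)).comp (tendsto_id.const_mul_atTop two_pos)

lemma one_div_nine_sqrt_two_mul_rpow_neg_half {l : ℝ} (hl : 0 < l) :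
    1 / (9 * √2) * l ^ (-(1 : ℝ) / 2) = 1 / (9 * ((2 * l) ^ ((1 : ℝ) / 4)) ^ 2) := by
  rw [← rpow_natCast, ← rpow_mul (by positivity), show (1 : ℝ) / 4 * (2 : ℕ) = 1 / 2 by norm_num,
    ← sqrt_eq_rpow, sqrt_mul zero_le_two, show -(1 : ℝ) / 2 = -(1 / 2) by norm_num,
    rpow_neg hl.le, ← sqrt_eq_rpow]
  field_simp

end HullLaplace

open HullLaplace

theorem stmt_7 (F : ℝ → ℝ)
    (hF : ∀ l : ℝ, F l = 3 ^ ((3 : ℝ) / 2) * Real.cosh ((2 * l) ^ ((1 : ℝ) / 4)) *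
      (Real.cosh ((2 * l) ^ ((1 : ℝ) / 4)) ^ 2 + 2) ^ (-(3 : ℝ) / 2)) :
    ((fun l => deriv (deriv F) l - 1 / (9 * Real.sqrt 2) * l ^ (-(1 : ℝ) / 2))
        =O[nhdsWithin 0 (Set.Ioi 0)] (fun _ => (1 : ℝ))) ∧
    (deriv (deriv F) =O[atTop] fun l => Real.exp (-2 * (2 * l) ^ ((1 : ℝ) / 4))) := by
  constructor
  · refine (isBigO_secondDeriv_sub_nhdsGT.comp_tendsto
      tendsto_two_mul_rpow_quarter_nhdsGT).congr' ?_ EventuallyEq.rfl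
    filter_upwards [self_mem_nhdsWithin] with l hl
    simp only [Function.comp_apply, deriv_deriv_eq_secondDeriv hF hl,
      one_div_nine_sqrt_two_mul_rpow_neg_half hl]
  · refine (isBigO_secondDeriv_atTop.comp_tendsto
      tendsto_two_mul_rpow_quarter_atTop).congr' ?_ EventuallyEq.rfl
    filter_upwards [eventually_gt_atTop 0] with l hl
    exact (deriv_deriv_eq_secondDeriv hF hl).symm
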